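/- arXiv:1412.8709 — 2 statements merged into one kernel-verified Lean document; each statement's English description precedes it below -/
import Mathlib

section
/- There exists a finite connected simple graph G without non-trivial bridges that contains two bad leaves at distance exactly 4 such that the square G² of G contains no [2,4]-factor. (Hence the distance bound 5 in the hypothesis 'any two bad leaves have distance at least 5' cannot be relaxed to 4.) -/
open SimpleGraph

variable {V : Type*}

/-- The square of a simple graph: two distinct vertices are adjacent iff their
distance in `G` is at most `2`, i.e. they are adjacent in `G` or have a common
neighbor in `G`. -/
def SimpleGraph.square (G : SimpleGraph V) : SimpleGraph V where
  Adj v w := v ≠ w ∧ (G.Adj v w ∨ ∃ u, G.Adj v u ∧ G.Adj u w)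
  symm := by
    constructor
    rintro v w ⟨hne, h | ⟨u, h1, h2⟩⟩
    · exact ⟨hne.symm, Or.inl h.symm⟩
    · exact ⟨hne.symm, Or.inr ⟨u, h2.symm, h1.symm⟩⟩
  loopless := by constructor; rintro v ⟨hne, -⟩; exact hne rfl

/-- The degree of a vertex, as the natural cardinality of its neighbor set. -/
noncomputable def degCount (G : SimpleGraph V) (v : V) : ℕ := (G.neighborSet v).ncard

/-- A leaf is a vertex of degree 1. -/
def IsLeaf (G : SimpleGraph V) (x : V) : Prop := degCount G x = 1

/-- `v` is a cut vertex of `G` if deleting `v` disconnects two vertices that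
were connected in `G`. -/
def IsCutVertex (G : SimpleGraph V) (v : V) : Prop :=
  ∃ a b : ({v}ᶜ : Set V), G.Reachable a b ∧ ¬ (G.induce ({v}ᶜ : Set V)).Reachable a b

/-- The set of leaves of `G` adjacent to `y`. -/
def leafNbrs (G : SimpleGraph V) (y : V) : Set V := {x | IsLeaf G x ∧ G.Adj y x}

/-- A cut vertex `y` is trivial if `y` is not a cut vertex of `G - M`, where `M`
is the set of all leaves adjacent to `y`. -/
def IsTrivialCutVertex (G : SimpleGraph V) (y : V) : Prop :=
  IsCutVertex G y ∧
    ¬ IsCutVertex (G.induce (leafNbrs G y)ᶜ) ⟨y, fun h => G.loopless.irrefl y h.2⟩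

/-- A leaf `x` with neighbor `y` is a bad leaf if `x` is the only leaf adjacent
to `y` and `y` is a trivial cut vertex of `G`. -/
def IsBadLeaf (G : SimpleGraph V) (x : V) : Prop :=
  IsLeaf G x ∧ ∃ y, G.Adj y x ∧ (∀ z, IsLeaf G z → G.Adj y z → z = x) ∧
    IsTrivialCutVertex G y

/-- A trivial bridge is a bridge incident with a leaf. -/
def IsTrivialBridge (G : SimpleGraph V) (e : Sym2 V) : Prop :=
  G.IsBridge e ∧ ∃ x ∈ e, IsLeaf G x

/-- A `[2,4]`-factor of `H`: a connected spanning subgraph in which every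
vertex has degree `2` or `4`. -/
def IsTwoFourFactor (H F : SimpleGraph V) : Prop :=
  F ≤ H ∧ F.Connected ∧ ∀ v, degCount F v = 2 ∨ degCount F v = 4

/-- A `[2,2s]`-factor of `H`: a connected spanning subgraph in which every
vertex has positive even degree at most `2 * s`. -/
def IsConnEvenFactor (H F : SimpleGraph V) (s : ℕ) : Prop :=
  F ≤ H ∧ F.Connected ∧
    ∀ v, degCount F v ≠ 0 ∧ Even (degCount F v) ∧ degCount F v ≤ 2 * s

/-- `G` is essentially 2-edge connected if deleting any single edge of `G`
cannot result in a graph with two components each having at least two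
vertices. -/
def EssentiallyTwoEdgeConnected (G : SimpleGraph V) : Prop :=
  ∀ a b : V, G.Adj a b →
    ¬ ∃ u v : V, ¬ (G.deleteEdges {s(a, b)}).Reachable u v ∧
      (∃ u', u' ≠ u ∧ (G.deleteEdges {s(a, b)}).Reachable u u') ∧
      (∃ v', v' ≠ v ∧ (G.deleteEdges {s(a, b)}).Reachable v v')

/-- A graph is 2-connected if it has at least three vertices, is connected, and
has no cut vertex. -/
def TwoConnected (G : SimpleGraph V) : Prop :=
  3 ≤ Nat.card V ∧ G.Connected ∧ ∀ v, ¬ IsCutVertex G v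

/-! Let `G` consist of two adjacent hubs `0, 1`, nine spokes `2, …, 10` joined to both hubs, and a
pendant leaf `i + 9` at each spoke `i`. Edges between hubs and spokes lie on triangles, so the only
bridges are the pendant edges; removing a leaf and its spoke leaves a graph held together by the
hubs, so every leaf is bad; and two leaves are joined by a leaf–spoke–hub–spoke–leaf path of
length `4`. In `G²` a leaf sees only its spoke and the two hubs, so in a `[2,4]`-factor each of the
nine leaves has degree `2` and hence a hub as a neighbour, while the two hubs have at most
`4 + 4 = 8` neighbours. -/

namespace SimpleGraph

variable {G : SimpleGraph V}

instance [Fintype V] [DecidableEq V] [DecidableRel G.Adj] : DecidableRel G.square.Adj :=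
  fun v w => inferInstanceAs (Decidable (v ≠ w ∧ (G.Adj v w ∨ ∃ u, G.Adj v u ∧ G.Adj u w)))

theorem degCount_eq_degree (v : V) [Fintype (G.neighborSet v)] : degCount G v = G.degree v := by
  rw [degCount, Set.ncard_eq_toFinset_card', ← card_neighborFinset_eq_degree, neighborFinset]

theorem neighborSet_eq_singleton_of_isLeaf {x y : V} (hx : IsLeaf G x) (hxy : G.Adj x y) :
    G.neighborSet x = {y} := by
  obtain ⟨z, hz⟩ := Set.ncard_eq_one.mp hx
  have hyz : y = z := by simpa [hz] using (show y ∈ G.neighborSet x from hxy)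
  rw [hz, hyz]

theorem reachable_of_forall_exists_adj_lt (f : V → ℕ) {t : V}
    (h : ∀ v, v ≠ t → ∃ u, G.Adj v u ∧ f u < f v) (v : V) : G.Reachable v t := by
  induction v using (measure f).wf.induction with
  | _ v ih =>
    by_cases hvt : v = t
    · exact hvt ▸ Reachable.refl v
    obtain ⟨u, hvu, hu⟩ := h v hvt
    exact hvu.reachable.trans (ih u hu)

theorem preconnected_of_forall_exists_adj_lt (f : V → ℕ) {t : V}
    (h : ∀ v, v ≠ t → ∃ u, G.Adj v u ∧ f u < f v) : G.Preconnected := fun v w =>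
  (reachable_of_forall_exists_adj_lt f h v).trans (reachable_of_forall_exists_adj_lt f h w).symm

theorem not_isCutVertex_of_preconnected {v : V} (h : (G.induce {v}ᶜ).Preconnected) :
    ¬ IsCutVertex G v := fun ⟨a, b, _, hab⟩ => hab (h a b)

theorem not_isCutVertex_induce_of_forall_exists_adj_lt {s : Set V} {y t : V} (hy : y ∈ s)
    (ht : t ∈ s) (hty : t ≠ y) (f : V → ℕ)
    (h : ∀ v ∈ s, v ≠ y → v ≠ t → ∃ u ∈ s, u ≠ y ∧ G.Adj v u ∧ f u < f v) :
    ¬ IsCutVertex (G.induce s) ⟨y, hy⟩ := by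
  refine not_isCutVertex_of_preconnected <| preconnected_of_forall_exists_adj_lt
    (t := ⟨⟨t, ht⟩, fun h => hty (congrArg Subtype.val h)⟩) (fun v => f v.1.1) ?_
  rintro ⟨⟨v, hvs⟩, hvy⟩ hvt
  obtain ⟨u, hus, huy, hvu, hu⟩ := h v hvs (fun h => hvy (Subtype.ext h))
    (fun h => hvt (by subst h; rfl))
  exact ⟨⟨⟨u, hus⟩, fun h => huy (congrArg Subtype.val h)⟩, hvu, hu⟩

theorem isCutVertex_of_isLeaf {x y w : V} (hx : IsLeaf G x) (hyx : G.Adj y x) (hyw : G.Adj y w)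
    (hwx : w ≠ x) : IsCutVertex G y := by
  refine ⟨⟨x, hyx.ne.symm⟩, ⟨w, hyw.ne.symm⟩, hyx.symm.reachable.trans hyw.reachable, ?_⟩
  rintro ⟨p⟩
  cases p with
  | nil => exact hwx rfl
  | @cons _ z _ hxz _ => exact z.2 ((neighborSet_eq_singleton_of_isLeaf hx hyx.symm).subset hxz)

theorem leafNbrs_eq_singleton {x y : V} (hx : IsLeaf G x) (hyx : G.Adj y x)
    (huniq : ∀ z, IsLeaf G z → G.Adj y z → z = x) : leafNbrs G y = {x} :=
  Set.eq_singleton_iff_unique_mem.mpr ⟨⟨hx, hyx⟩, fun z hz => huniq z hz.1 hz.2⟩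

theorem isBadLeaf_of_forall_exists_adj_lt {x y w t : V} (hx : IsLeaf G x) (hyx : G.Adj y x)
    (huniq : ∀ z, IsLeaf G z → G.Adj y z → z = x) (hyw : G.Adj y w) (hwx : w ≠ x) (f : V → ℕ)
    (htx : t ≠ x) (hty : t ≠ y)
    (h : ∀ v, v ≠ x → v ≠ y → v ≠ t → ∃ u, u ≠ x ∧ u ≠ y ∧ G.Adj v u ∧ f u < f v) :
    IsBadLeaf G x := by
  have hM : ∀ v, v ∈ (leafNbrs G y)ᶜ ↔ v ≠ x := by
    simp [leafNbrs_eq_singleton hx hyx huniq]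
  refine ⟨hx, y, hyx, huniq, isCutVertex_of_isLeaf hx hyx hyw hwx,
    not_isCutVertex_induce_of_forall_exists_adj_lt _ ((hM t).mpr htx) hty f ?_⟩
  intro v hv hvy hvt
  obtain ⟨u, hux, huy, hvu, hu⟩ := h v ((hM v).mp hv) hvy hvt
  exact ⟨u, (hM u).mpr hux, huy, hvu, hu⟩

theorem not_isBridge_of_adj_of_adj {a b c : V} (hac : G.Adj a c) (hcb : G.Adj c b) :
    ¬ G.IsBridge s(a, b) := by
  rw [isBridge_iff, not_not]
  have hac' : (G.deleteEdges {s(a, b)}).Adj a c := by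
    simp only [deleteEdges_adj, Set.mem_singleton_iff, Sym2.eq_iff]
    exact ⟨hac, by grind [hac.ne, hcb.ne]⟩
  have hcb' : (G.deleteEdges {s(a, b)}).Adj c b := by
    simp only [deleteEdges_adj, Set.mem_singleton_iff, Sym2.eq_iff]
    exact ⟨hcb, by grind [hac.ne, hcb.ne]⟩
  exact hac'.reachable.trans hcb'.reachable

theorem isTrivialBridge_of_isBridge (hG : G.Preconnected)
    (h : ∀ a b, G.Adj a b → IsLeaf G a ∨ IsLeaf G b ∨ ∃ c, G.Adj a c ∧ G.Adj c b) {e : Sym2 V}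
    (he : G.IsBridge e) : IsTrivialBridge G e := by
  induction e using Sym2.ind with
  | _ a b =>
    refine ⟨he, ?_⟩
    rcases h a b (he.reachable_iff_adj.mp (hG a b)) with ha | hb | ⟨c, hac, hcb⟩
    · exact ⟨a, Sym2.mem_mk_left a b, ha⟩
    · exact ⟨b, Sym2.mem_mk_right a b, hb⟩
    · exact absurd he (not_isBridge_of_adj_of_adj hac hcb)

theorem le_add_length_of_forall_adj_le (f : V → ℕ) (hf : ∀ a b, G.Adj a b → f b ≤ f a + 1)
    {u v : V} (p : G.Walk u v) : f v ≤ f u + p.length := by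
  induction p with
  | nil => simp
  | cons h _ ih => grind [Walk.length_cons, hf _ _ h]

theorem le_add_dist_of_forall_adj_le (f : V → ℕ) (hf : ∀ a b, G.Adj a b → f b ≤ f a + 1)
    {u v : V} (huv : G.Reachable u v) : f v ≤ f u + G.dist u v := by
  obtain ⟨p, hp⟩ := huv.exists_walk_length_eq_dist
  exact hp ▸ le_add_length_of_forall_adj_le f hf p

theorem not_isTwoFourFactor_of_card_lt {H F : SimpleGraph V} (S L : Finset V)
    (hL : ∀ w ∈ L, ∃ a, H.neighborSet w ⊆ insert a ↑S) (hcard : 4 * S.card < L.card) :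
    ¬ IsTwoFourFactor H F := by
  rintro ⟨hFH, -, hdeg⟩
  have hdeg_two : ∀ v, 2 ≤ degCount F v := fun v => by rcases hdeg v with h | h <;> omega
  have hdeg_four : ∀ v, degCount F v ≤ 4 := fun v => by rcases hdeg v with h | h <;> omega
  have hfin : ∀ v, (F.neighborSet v).Finite := fun v =>
    Set.finite_of_ncard_pos (by have := hdeg_two v; unfold degCount at this; omega)
  have hmeet : ∀ w ∈ L, ∃ s ∈ S, F.Adj w s := by
    intro w hw
    obtain ⟨a, ha⟩ := hL w hw
    by_contra! hno
    have hsub : F.neighborSet w ⊆ {a} := fun z hz =>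
      (ha (hFH hz)).resolve_right (hno z · hz)
    have := (Set.ncard_le_ncard hsub).trans_eq (Set.ncard_singleton a)
    have := hdeg_two w
    unfold degCount at *
    omega
  suffices L.card ≤ 4 * S.card by omega
  calc L.card ≤ (⋃ s ∈ S, F.neighborSet s).ncard := by
        rw [← Set.ncard_coe_finset]
        refine Set.ncard_le_ncard (fun w hw => ?_) (S.finite_toSet.biUnion fun s _ => hfin s)
        obtain ⟨s, hs, hws⟩ := hmeet w hw
        exact Set.mem_biUnion hs hws.symm
    _ ≤ ∑ s ∈ S, degCount F s := S.set_ncard_biUnion_le _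
    _ ≤ ∑ _s ∈ S, 4 := Finset.sum_le_sum fun s _ => hdeg_four s
    _ = 4 * S.card := by rw [Finset.sum_const, smul_eq_mul, mul_comm]

end SimpleGraph

def twoHubGraph : SimpleGraph (Fin 20) := SimpleGraph.fromRel fun u v =>
  (u = 0 ∧ v = 1) ∨ (u ≤ 1 ∧ 2 ≤ v ∧ v ≤ 10) ∨ (2 ≤ u ∧ u ≤ 10 ∧ v.val = u.val + 9)

instance : DecidableRel twoHubGraph.Adj := fun _ _ => by
  unfold twoHubGraph; infer_instance

theorem isLeaf_twoHubGraph_iff (v : Fin 20) : IsLeaf twoHubGraph v ↔ 11 ≤ v := by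
  rw [IsLeaf, degCount_eq_degree]
  revert v
  decide

theorem twoHubGraph_connected : twoHubGraph.Connected :=
  ⟨preconnected_of_forall_exists_adj_lt Fin.val (t := 0) (by decide)⟩

theorem isTrivialBridge_twoHubGraph {e : Sym2 (Fin 20)} (he : twoHubGraph.IsBridge e) :
    IsTrivialBridge twoHubGraph e :=
  isTrivialBridge_of_isBridge twoHubGraph_connected.preconnected
    (by simp only [isLeaf_twoHubGraph_iff]; decide) he

theorem isBadLeaf_twoHubGraph {x : Fin 20} (hx : 11 ≤ x) : IsBadLeaf twoHubGraph x := by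
  refine isBadLeaf_of_forall_exists_adj_lt (y := x - 9) (w := 0) (t := 0)
    ((isLeaf_twoHubGraph_iff x).mpr hx) ?_ ?huniq ?_ ?_ Fin.val ?_ ?_ ?_
  case huniq => simp only [isLeaf_twoHubGraph_iff]; revert x; decide
  all_goals revert x; decide

theorem twoHubGraph_dist : twoHubGraph.dist 11 12 = 4 := by
  -- `f` is the distance from `11`
  let f : Fin 20 → ℕ := fun v =>
    if v = 11 then 0 else if v = 2 then 1 else if v ≤ 1 then 2 else if v ≤ 10 then 3 else 4
  have hlow : 4 ≤ 0 + twoHubGraph.dist 11 12 :=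
    le_add_dist_of_forall_adj_le f (by decide) (twoHubGraph_connected 11 12)
  have hup : twoHubGraph.dist 11 12 ≤ 4 := (dist_le <|
    .cons (by decide : twoHubGraph.Adj 11 2) <| .cons (by decide : twoHubGraph.Adj 2 0) <|
    .cons (by decide : twoHubGraph.Adj 0 3) <| .cons (by decide : twoHubGraph.Adj 3 12) .nil
    ).trans_eq rfl
  omega

theorem twoHubGraph_square_not_isTwoFourFactor (F : SimpleGraph (Fin 20)) :
    ¬ IsTwoFourFactor twoHubGraph.square F := by
  refine not_isTwoFourFactor_of_card_lt {0, 1} (Finset.univ.filter (11 ≤ ·)) ?_ (by decide)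
  intro w hw
  refine ⟨w - 9, fun z hz => ?_⟩
  simp only [Finset.mem_filter, Finset.mem_univ, true_and] at hw
  revert w z
  decide

/-- There is a finite connected simple graph without
non-trivial bridges, having two bad leaves at distance exactly `4`, whose
square has no `[2,4]`-factor. -/
theorem exists_graph_badLeaves_dist_four_square_no_twoFourFactor :
    ∃ (m : ℕ) (G : SimpleGraph (Fin m)), G.Connected ∧
      (∀ e : Sym2 (Fin m), G.IsBridge e → IsTrivialBridge G e) ∧
      (∃ x₁ x₂ : Fin m, IsBadLeaf G x₁ ∧ IsBadLeaf G x₂ ∧ G.dist x₁ x₂ = 4) ∧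
      ¬ ∃ F : SimpleGraph (Fin m), IsTwoFourFactor G.square F :=
  ⟨20, twoHubGraph, twoHubGraph_connected, fun _ => isTrivialBridge_twoHubGraph,
    ⟨11, 12, isBadLeaf_twoHubGraph (by decide), isBadLeaf_twoHubGraph (by decide),
      twoHubGraph_dist⟩,
    fun ⟨F, hF⟩ => twoHubGraph_square_not_isTwoFourFactor F hF⟩
end

section
/- In any finite connected simple graph G, any two distinct bad leaves of G are at distance at least 3 in G. -/
open SimpleGraph

variable {V : Type*}

namespace IsLeaf

variable {G : SimpleGraph V} {x u w : V}

lemma neighborSet_subsingleton (hx : IsLeaf G x) : (G.neighborSet x).Subsingleton :=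
  (Set.ncard_eq_one.mp hx).elim fun _ h ↦ h ▸ Set.subsingleton_singleton

lemma eq_of_adj_of_adj (hx : IsLeaf G x) (hu : G.Adj x u) (hw : G.Adj x w) : u = w :=
  hx.neighborSet_subsingleton hu hw

/-- A path through a leaf must end there, so the connecting path between two other vertices
avoids it. -/
lemma not_isCutVertex (hx : IsLeaf G x) : ¬ IsCutVertex G x := by
  classical
  rintro ⟨⟨a, ha⟩, ⟨b, hb⟩, ⟨p⟩, hnr⟩
  have hx_notMem : ∀ v ∈ p.bypass.support, v ∈ ({x}ᶜ : Set V) := fun v hv hvx ↦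
    p.bypass_isPath.isTrail.not_mem_support_of_subsingleton_neighborSet
      (Ne.symm ha) (Ne.symm hb) hx.neighborSet_subsingleton (hvx ▸ hv)
  exact hnr ⟨p.bypass.induce _ hx_notMem⟩

end IsLeaf

namespace IsBadLeaf

variable {G : SimpleGraph V} {x x' u : V}

lemma isLeaf (hx : IsBadLeaf G x) : IsLeaf G x := hx.1

/-- The neighbour of a bad leaf is a cut vertex, hence not a leaf. -/
lemma not_adj_of_isLeaf (hx : IsBadLeaf G x) (hx' : IsLeaf G x') : ¬ G.Adj x x' := by
  obtain ⟨hleaf, y, hyx, -, hy, -⟩ := hx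
  intro hxx'
  obtain rfl : y = x' := hleaf.eq_of_adj_of_adj hyx.symm hxx'
  exact hx'.not_isCutVertex hy

lemma eq_of_isLeaf_of_adj_of_adj (hx : IsBadLeaf G x) (hx' : IsLeaf G x')
    (hxu : G.Adj x u) (hx'u : G.Adj x' u) : x' = x := by
  obtain ⟨hleaf, y, hyx, hunique, -⟩ := hx
  obtain rfl : u = y := hleaf.eq_of_adj_of_adj hxu hyx.symm
  exact hunique x' hx' hx'u.symm

lemma commonNeighbors_eq_empty_of_isLeaf (hx : IsBadLeaf G x) (hx' : IsLeaf G x')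
    (hne : x' ≠ x) : G.commonNeighbors x' x = ∅ :=
  Set.eq_empty_of_forall_notMem fun _ hu ↦ hne (hx.eq_of_isLeaf_of_adj_of_adj hx' hu.2 hu.1)

end IsBadLeaf

theorem badLeaves_dist_ge_three_general
    {V : Type*} (G : SimpleGraph V) (hconn : G.Connected)
    (x₁ x₂ : V) (h₁ : IsBadLeaf G x₁) (h₂ : IsBadLeaf G x₂) (hne : x₁ ≠ x₂) :
    3 ≤ G.dist x₁ x₂ := by
  have h : 2 < G.edist x₁ x₂ := two_lt_edist_iff.mpr
    ⟨hne, h₁.not_adj_of_isLeaf h₂.isLeaf, h₂.commonNeighbors_eq_empty_of_isLeaf h₁.isLeaf hne⟩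
  rw [← (hconn x₁ x₂).coe_dist_eq_edist] at h
  exact_mod_cast h

/-- In a finite connected simple graph, any two distinct bad
leaves are at distance at least `3`. -/
theorem badLeaves_dist_ge_three
    {V : Type*} [Fintype V] (G : SimpleGraph V) (hconn : G.Connected)
    (x₁ x₂ : V) (h₁ : IsBadLeaf G x₁) (h₂ : IsBadLeaf G x₂) (hne : x₁ ≠ x₂) :
    3 ≤ G.dist x₁ x₂ :=
  badLeaves_dist_ge_three_general G hconn x₁ x₂ h₁ h₂ hne
end
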